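/- Let x be continuous at τₖ and piecewise C¹ with ẋ(t) = f_{k-1}(t) on (τ_{k-1}, τₖ) and ẋ(t) = f_k(t) on (τₖ, τ_{k+1}), where the event time τₖ(θ) and the state x(θ,t) are C¹ in θ. Then the one-sided θ-derivatives satisfy x'(τₖ⁺) = x'(τₖ⁻) + [f_{k-1}(τₖ⁻) − f_k(τₖ⁺)]·τₖ'. -/

import Mathlib

open Real Set

theorem HasFDerivAt.hasDerivAt_comp_graph {E G : Type*}
    [NormedAddCommGroup E] [NormedSpace ℝ E] [NormedAddCommGroup G] [NormedSpace ℝ G]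
    {g : ℝ × E → G} {L : ℝ × E →L[ℝ] G} {τ : ℝ → E} {τ' : E} {θ₀ : ℝ}
    (hg : HasFDerivAt g L (θ₀, τ θ₀)) (hτ : HasDerivAt τ τ' θ₀) :
    HasDerivAt (fun θ => g (θ, τ θ)) (L (1, τ')) θ₀ :=
  hg.comp_hasDerivAt θ₀ ((hasDerivAt_id θ₀).prodMk hτ)

theorem ContinuousLinearMap.apply_one_prod {M : Type*} [AddCommGroup M] [Module ℝ M]
    [TopologicalSpace M] (L : ℝ × ℝ →L[ℝ] M) (c : ℝ) :
    L (1, c) = L (1, 0) + c • L (0, 1) := by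
  rw [← map_smul, ← map_add]
  simp

/-- `Lp`, `Ln` are the total derivatives in `(θ, t)` of the pre- and post-event pieces at the
event, so `Lp (1,0)`, `Lp (0,1)` are `x'(τ⁻)`, `f_{k-1}(τ⁻)` and `Ln (1,0)`, `Ln (0,1)` are
`x'(τ⁺)`, `f_k(τ⁺)`. -/
theorem stmt10 (ξp ξn : ℝ → ℝ → ℝ) (τ : ℝ → ℝ)
    (θ₀ τ' xL xR fprev fnext : ℝ)
    (Lp Ln : ℝ × ℝ →L[ℝ] ℝ)
    (hp : HasFDerivAt (fun q : ℝ × ℝ => ξp q.1 q.2) Lp (θ₀, τ θ₀))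
    (hn : HasFDerivAt (fun q : ℝ × ℝ => ξn q.1 q.2) Ln (θ₀, τ θ₀))
    (hxL : Lp (1, 0) = xL) (hfp : Lp (0, 1) = fprev)
    (hxR : Ln (1, 0) = xR) (hfn : Ln (0, 1) = fnext)
    (hτ : HasDerivAt τ τ' θ₀)
    (hmatch : ∀ θ, ξp θ (τ θ) = ξn θ (τ θ)) :
    xR = xL + (fprev - fnext) * τ' := by
  have hP := hp.hasDerivAt_comp_graph hτ
  have hN := hn.hasDerivAt_comp_graph hτ
  simp only [hmatch] at hP
  have h := hP.unique hN
  rw [Lp.apply_one_prod, Ln.apply_one_prod, hxL, hfp, hxR, hfn, smul_eq_mul, smul_eq_mul] at h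
  linarith
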